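/- arXiv:2012.00903 — 2 statements merged into one kernel-verified Lean document; each statement's English description precedes it below -/
import Mathlib

section
/- Let A be a unital C*-algebra, B ⊆ A a unital C*-subalgebra, and E : A → B a faithful conditional expectation onto B. Let W, V ∈ A and m ≥ 0 be such that E((W* W)^n) ≤ m^{2n} E((V* V)^n) in the C*-order of B for every n ≥ 1. Then ‖W‖ ≤ m ‖V‖. -/
open Filter

/-- `E : A → A` is a conditional expectation onto the C*-subalgebra `B`:
it takes values in `B`, fixes `B`, is a `B`-bimodule map, and is positive and contractive. -/
structure IsCondExp {A : Type*} [CStarAlgebra A] [PartialOrder A] [StarOrderedRing A]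
    (B : StarSubalgebra ℂ A) (E : A →ₗ[ℂ] A) : Prop where
  mem_range : ∀ x : A, E x ∈ B
  fixes : ∀ b ∈ B, E b = b
  bimodule : ∀ b₁ ∈ B, ∀ b₂ ∈ B, ∀ x : A, E (b₁ * x * b₂) = b₁ * E x * b₂
  positive : ∀ x : A, 0 ≤ x → 0 ≤ E x
  contractive : ∀ x : A, ‖E x‖ ≤ ‖x‖

/-!
For `a ≥ 0` and `s < ‖a‖`, cutting `a` off below `s` by the functional calculus
(`x ↦ min 1 (max 0 (x - s))`, nonzero at `‖a‖ ∈ spectrum ℝ a`) gives `b ≥ 0`, `b ≠ 0` with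
`sⁿ b ≤ aⁿ`; faithfulness makes `E b ≠ 0`, so `sⁿ ‖E b‖ ≤ ‖E (aⁿ)‖`. Hence a geometric bound
`‖E (aⁿ)‖ ≤ rⁿ` forces `‖a‖ ≤ r`. For `a = W⋆W` the hypothesis, positivity and contractivity
of `E` give `‖E (aⁿ)‖ ≤ (m ‖V‖)²ⁿ`, and `‖W⋆W‖ = ‖W‖²`.
-/

open Topology CFC

theorem le_of_eventually_mul_pow_le_pow {c r s : ℝ} (hc : 0 < c) (hr : 0 ≤ r)
    (h : ∀ᶠ n in atTop, c * s ^ n ≤ r ^ n) : s ≤ r := by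
  by_contra! hrs
  have hs : 0 < s := hr.trans_lt hrs
  have hlim : Tendsto (fun n : ℕ ↦ (r / s) ^ n) atTop (𝓝 0) :=
    tendsto_pow_atTop_nhds_zero_of_lt_one (div_nonneg hr hs.le) ((div_lt_one hs).2 hrs)
  have : c ≤ 0 := ge_of_tendsto hlim <| h.mono fun n hn ↦ by
    rwa [div_pow, le_div_iff₀ (pow_pos hs n)]
  linarith

theorem pow_mul_min_one_max_zero_sub_le {s x : ℝ} (hs : 0 ≤ s) (hx : 0 ≤ x) (n : ℕ) :
    s ^ n * min 1 (max 0 (x - s)) ≤ x ^ n := by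
  rcases le_or_gt x s with hxs | hsx
  · simp [max_eq_left (sub_nonpos.2 hxs), pow_nonneg hx]
  · calc s ^ n * min 1 (max 0 (x - s)) ≤ s ^ n * 1 := by gcongr; exact min_le_left _ _
      _ ≤ x ^ n := by rw [mul_one]; gcongr

section CStarAlgebra

variable {A : Type*} [CStarAlgebra A] [PartialOrder A] [StarOrderedRing A]

theorem eq_zero_of_nonneg_of_map_eq_zero {E : A → A}
    (hfaithful : ∀ x : A, E (star x * x) = 0 → x = 0) {b : A} (hb : 0 ≤ b) (hEb : E b = 0) :
    b = 0 := by
  have hsqrt : star (sqrt b) * sqrt b = b := by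
    rw [(sqrt_nonneg b).isSelfAdjoint.star_eq, sqrt_mul_sqrt_self b]
  exact (sqrt_eq_zero_iff b).1 (hfaithful _ (by rwa [hsqrt]))

theorem exists_nonneg_ne_zero_smul_pow_le_pow {a : A} (ha : 0 ≤ a) {s : ℝ} (hs0 : 0 ≤ s)
    (hs : s < ‖a‖) : ∃ b : A, 0 ≤ b ∧ b ≠ 0 ∧ ∀ n : ℕ, s ^ n • b ≤ a ^ n := by
  have : Nontrivial A := nontrivial_of_ne a 0 (norm_pos_iff.1 (hs0.trans_lt hs))
  set g : ℝ → ℝ := fun x ↦ min 1 (max 0 (x - s))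
  have hg : Continuous g := by fun_prop
  refine ⟨cfc g a, cfc_nonneg fun x _ ↦ by positivity, fun hb ↦ ?_, fun n ↦ ?_⟩
  · have hg_norm : g ‖a‖ ≠ 0 := (lt_min one_pos (lt_max_of_lt_right (sub_pos.2 hs))).ne'
    exact hg_norm <| (eqOn_of_cfc_eq_cfc (hb.trans (cfc_zero ℝ a).symm))
      (CStarAlgebra.norm_mem_spectrum_of_nonneg ha)
  · rw [← cfc_const_mul .., ← cfc_pow_id (R := ℝ) a n]
    exact cfc_mono fun x hx ↦
      pow_mul_min_one_max_zero_sub_le hs0 (spectrum_nonneg_of_nonneg ha hx) n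

theorem norm_le_of_norm_map_pow_le (E : A →ₚ[ℝ] A)
    (hfaithful : ∀ x : A, E (star x * x) = 0 → x = 0) {a : A} (ha : 0 ≤ a) {r : ℝ} (hr : 0 ≤ r)
    (h : ∀ n : ℕ, 1 ≤ n → ‖E (a ^ n)‖ ≤ r ^ n) : ‖a‖ ≤ r := by
  refine le_of_forall_lt_imp_le_of_dense fun s hs ↦ ?_
  rcases lt_or_ge s 0 with hs0 | hs0
  · linarith
  obtain ⟨b, hb0, hb, hle⟩ := exists_nonneg_ne_zero_smul_pow_le_pow ha hs0 hs
  have hEb : 0 < ‖E b‖ :=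
    norm_pos_iff.2 fun h0 ↦ hb (eq_zero_of_nonneg_of_map_eq_zero hfaithful hb0 h0)
  refine le_of_eventually_mul_pow_le_pow hEb hr (eventually_atTop.2 ⟨1, fun n hn ↦ ?_⟩)
  calc ‖E b‖ * s ^ n = ‖E (s ^ n • b)‖ := by
        rw [map_smul, norm_smul, Real.norm_of_nonneg (pow_nonneg hs0 n), mul_comm]
    _ ≤ ‖E (a ^ n)‖ := CStarAlgebra.norm_le_norm_of_nonneg_of_le
        (E.map_nonneg (smul_nonneg (pow_nonneg hs0 n) hb0)) (OrderHomClass.mono E (hle n))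
    _ ≤ r ^ n := h n hn

end CStarAlgebra

theorem norm_le_of_condexp_pow_le_general
    {A : Type*} [CStarAlgebra A] [PartialOrder A] [StarOrderedRing A]
    (B : StarSubalgebra ℂ A)
    (E : A →ₗ[ℂ] A) (hE : IsCondExp B E)
    (hfaithful : ∀ x : A, E (star x * x) = 0 → x = 0)
    (W V : A) (m : ℝ) (hm : 0 ≤ m)
    (h : ∀ n : ℕ, 1 ≤ n →
      E ((star W * W) ^ n) ≤ ((m : ℂ) ^ (2 * n)) • E ((star V * V) ^ n)) :
    ‖W‖ ≤ m * ‖V‖ := by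
  have hbound : ∀ n : ℕ, 1 ≤ n → ‖E ((star W * W) ^ n)‖ ≤ ((m * ‖V‖) ^ 2) ^ n := by
    intro n hn
    calc ‖E ((star W * W) ^ n)‖ ≤ ‖((m : ℂ) ^ (2 * n)) • E ((star V * V) ^ n)‖ :=
          CStarAlgebra.norm_le_norm_of_nonneg_of_le
            (hE.positive _ (CStarAlgebra.pow_nonneg (star_mul_self_nonneg W) n)) (h n hn)
      _ ≤ (m ^ 2) ^ n * ‖star V * V‖ ^ n := by
          rw [norm_smul, norm_pow, Complex.norm_real, Real.norm_eq_abs, pow_mul, sq_abs]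
          gcongr
          exact (hE.contractive _).trans (norm_pow_le' _ hn)
      _ = ((m * ‖V‖) ^ 2) ^ n := by rw [CStarRing.norm_star_mul_self]; ring
  have hW := norm_le_of_norm_map_pow_le (.mk₀ (E.restrictScalars ℝ) hE.positive) hfaithful
    (star_mul_self_nonneg W) (by positivity) hbound
  rw [CStarRing.norm_star_mul_self, ← sq] at hW
  exact (pow_le_pow_iff_left₀ (norm_nonneg W) (by positivity) two_ne_zero).1 hW

/-- If `E` is a faithful conditional expectation from a unital C*-algebra `A` onto a unital
C*-subalgebra `B`, and `W, V ∈ A`, `m ≥ 0` satisfy `E((W* W)ⁿ) ≤ m^{2n} E((V* V)ⁿ)` for all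
`n ≥ 1`, then `‖W‖ ≤ m ‖V‖`. -/
theorem norm_le_of_condexp_pow_le
    {A : Type*} [CStarAlgebra A] [PartialOrder A] [StarOrderedRing A]
    (B : StarSubalgebra ℂ A) (hBclosed : IsClosed (B : Set A))
    (E : A →ₗ[ℂ] A) (hE : IsCondExp B E)
    (hfaithful : ∀ x : A, E (star x * x) = 0 → x = 0)
    (W V : A) (m : ℝ) (hm : 0 ≤ m)
    (h : ∀ n : ℕ, 1 ≤ n →
      E ((star W * W) ^ n) ≤ ((m : ℂ) ^ (2 * n)) • E ((star V * V) ^ n)) :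
    ‖W‖ ≤ m * ‖V‖ :=
  norm_le_of_condexp_pow_le_general B E hE hfaithful W V m hm h
end

section
/- Let A be a unital C*-algebra, B ⊆ A a commutative unital C*-subalgebra, and E : A → B a conditional expectation onto B. Let T ∈ A satisfy E(b₀ T b₁ T b₂ ⋯ T b_p) = 0 for every p ≥ 1 and all b₀, b₁, …, b_p ∈ B. Let b ∈ B be invertible and suppose b^{-1} T is quasinilpotent, so that Z = b + T is invertible, and set Y₁ = Z^{-1} − b^{-1}. Then E(b₀ Y₁ b₁ Y₁ b₂ ⋯ Y₁ b_p) = 0 for every p ≥ 1 and all b₀, b₁, …, b_p ∈ B. -/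
open Filter Topology

section Words

variable {A S : Type*} [Monoid A] [SetLike S A]

def wordSet (B : S) (T : A) : Set A :=
  {x | ∃ b₀ ∈ B, ∃ l : List A, l ≠ [] ∧ (∀ c ∈ l, c ∈ B) ∧
    x = b₀ * (l.map (fun c => T * c)).prod}

variable {B : S} {T : A}

theorem prod_map_mul_mem {S' : Type*} [SetLike S' A] [MulMemClass S' A] {M : S'}
    (hright : ∀ x ∈ M, ∀ c ∈ B, x * c ∈ M) {Y : A} (hY : Y ∈ M) :
    ∀ {l : List A}, l ≠ [] → (∀ c ∈ l, c ∈ B) → (l.map (fun c => Y * c)).prod ∈ M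
  | [], hl, _ => (hl rfl).elim
  | [c], _, hlB => by simpa using hright Y hY c (hlB c (by simp))
  | c :: d :: l, _, hlB => by
    rw [List.map_cons, List.prod_cons]
    exact mul_mem (hright Y hY c (hlB c (by simp)))
      (prod_map_mul_mem hright hY (List.cons_ne_nil d l) fun e he =>
        hlB e (List.mem_cons_of_mem c he))

theorem wordSet_subset {S' : Type*} [SetLike S' A] [MulMemClass S' A] {M : S'}
    (hleft : ∀ c ∈ B, ∀ x ∈ M, c * x ∈ M) (hright : ∀ x ∈ M, ∀ c ∈ B, x * c ∈ M)
    {Y : A} (hY : Y ∈ M) : wordSet B Y ⊆ M := by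
  rintro _ ⟨b₀, hb₀, l, hl, hlB, rfl⟩
  exact hleft b₀ hb₀ _ (prod_map_mul_mem hright hY hl hlB)

theorem pow_succ_mul_mem_wordSet {c : A} (hc : c ∈ B) (n : ℕ) :
    (c * T) ^ (n + 1) * c ∈ wordSet B T :=
  ⟨c, hc, List.replicate (n + 1) c, by simp, fun _ he => List.eq_of_mem_replicate he ▸ hc,
    by simp [mul_pow_mul]⟩

variable [MulMemClass S A]

theorem mul_mem_wordSet_left {c x : A} (hc : c ∈ B) (hx : x ∈ wordSet B T) :
    c * x ∈ wordSet B T := by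
  obtain ⟨b₀, hb₀, l, hl, hlB, rfl⟩ := hx
  exact ⟨c * b₀, mul_mem hc hb₀, l, hl, hlB, (mul_assoc _ _ _).symm⟩

theorem mul_mem_wordSet_right {x d : A} (hx : x ∈ wordSet B T) (hd : d ∈ B) :
    x * d ∈ wordSet B T := by
  obtain ⟨b₀, hb₀, l, hl, hlB, rfl⟩ := hx
  obtain ⟨L, a, rfl⟩ := (List.eq_nil_or_concat' l).resolve_left hl
  refine ⟨b₀, hb₀, L ++ [a * d], by simp, fun c hc => ?_, by simp [mul_assoc]⟩
  rcases List.mem_append.1 hc with hc | hc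
  · exact hlB c (List.mem_append_left _ hc)
  · rw [List.mem_singleton.1 hc]
    exact mul_mem (hlB a (by simp)) hd

theorem mul_mem_wordSet {x y : A} (hx : x ∈ wordSet B T) (hy : y ∈ wordSet B T) :
    x * y ∈ wordSet B T := by
  obtain ⟨b₀', hb₀', l₂, hl₂, hl₂B, rfl⟩ := hy
  obtain ⟨b₀, hb₀, l₁, hl₁, hl₁B, hx'⟩ := mul_mem_wordSet_right hx hb₀'
  refine ⟨b₀, hb₀, l₁ ++ l₂, by simp [hl₁], fun c hc => ?_, ?_⟩
  · exact (List.mem_append.1 hc).elim (hl₁B c) (hl₂B c)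
  · rw [← mul_assoc, hx']
    simp [mul_assoc]

end Words

section WordAlgebra

variable (R : Type*) {A S : Type*} [CommSemiring R] [Semiring A] [Algebra R A]
  [SetLike S A] [MulMemClass S A]

def wordAlgebra (B : S) (T : A) : NonUnitalSubalgebra R A :=
  (Submodule.span R (wordSet B T)).toNonUnitalSubalgebra fun x y hx hy => by
    have hxy := Submodule.mul_mem_mul hx hy
    rw [Submodule.span_mul_span] at hxy
    refine Submodule.span_mono ?_ hxy
    rintro _ ⟨x, hx, y, hy, rfl⟩
    exact mul_mem_wordSet hx hy

variable {R} {B : S} {T : A}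

theorem mul_mem_wordAlgebra_left {c x : A} (hc : c ∈ B) (hx : x ∈ wordAlgebra R B T) :
    c * x ∈ wordAlgebra R B T := by
  induction hx using Submodule.span_induction with
  | mem y hy => exact Submodule.subset_span (mul_mem_wordSet_left hc hy)
  | zero => simp
  | add y z _ _ hy hz => rw [mul_add]; exact add_mem hy hz
  | smul r y _ hy => rw [mul_smul_comm]; exact Submodule.smul_mem _ r hy

theorem mul_mem_wordAlgebra_right {x d : A} (hx : x ∈ wordAlgebra R B T) (hd : d ∈ B) :
    x * d ∈ wordAlgebra R B T := by
  induction hx using Submodule.span_induction with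
  | mem y hy => exact Submodule.subset_span (mul_mem_wordSet_right hy hd)
  | zero => simp
  | add y z _ _ hy hz => rw [add_mul]; exact add_mem hy hz
  | smul r y _ hy => rw [smul_mul_assoc]; exact Submodule.smul_mem _ r hy

theorem map_eq_zero_of_mem_wordAlgebra {F : Type*} [AddCommMonoid F] [Module R F]
    {E : A →ₗ[R] F} (hT : ∀ x ∈ wordSet B T, E x = 0) {x : A} (hx : x ∈ wordAlgebra R B T) :
    E x = 0 :=
  Submodule.span_le (p := LinearMap.ker E) |>.2 hT hx

end WordAlgebra

section Neumann

variable {R : Type*} [Ring R] [TopologicalSpace R] [IsTopologicalRing R] [T2Space R]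

theorem Ring.inverse_one_sub_eq_tsum {x : R} (h : Summable (x ^ ·)) :
    Ring.inverse (1 - x) = ∑' n, x ^ n :=
  Ring.inverse_unit ⟨1 - x, _, h.one_sub_mul_tsum_pow, h.tsum_pow_mul_one_sub⟩

variable {b b' T : R}

theorem Ring.inverse_add_eq_tsum_mul (hbb' : b * b' = 1) (hb'b : b' * b = 1)
    (hs : Summable fun n => (-(b' * T)) ^ n) :
    Ring.inverse (b + T) = (∑' n, (-(b' * T)) ^ n) * b' := by
  have hfactor : b + T = b * (1 - -(b' * T)) := by
    rw [sub_neg_eq_add, mul_add, mul_one, ← mul_assoc, hbb', one_mul]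
  rw [hfactor, Ring.inverse_mul (Or.inl ⟨⟨b, b', hbb', hb'b⟩, rfl⟩),
    Ring.inverse_one_sub_eq_tsum hs]
  congr
  exact Ring.inverse_unit ⟨b, b', hbb', hb'b⟩

theorem Ring.inverse_add_sub_eq_tsum (hbb' : b * b' = 1) (hb'b : b' * b = 1)
    (hs : Summable fun n => (-(b' * T)) ^ n) :
    Ring.inverse (b + T) - b' = ∑' n, (-(b' * T)) ^ (n + 1) * b' := by
  rw [Ring.inverse_add_eq_tsum_mul hbb' hb'b hs, hs.tsum_eq_zero_add, pow_zero, add_mul, one_mul,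
    add_sub_cancel_left, ((summable_nat_add_iff 1).2 hs).tsum_mul_right]

end Neumann

theorem spectralRadius_neg {𝕜 A : Type*} [NormedField 𝕜] [Ring A] [Algebra 𝕜 A] (a : A) :
    spectralRadius 𝕜 (-a) = spectralRadius 𝕜 a := by
  simp only [spectralRadius, ← spectrum.neg_eq, Set.mem_neg]
  exact (Equiv.neg 𝕜).iSup_congr fun k => by simp

theorem summable_pow_of_spectralRadius_lt_one {A : Type*} [NormedRing A] [NormedAlgebra ℂ A]
    [CompleteSpace A] {a : A} (ha : spectralRadius ℂ a < 1) : Summable fun n => a ^ n := by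
  obtain ⟨r, hρr, hr1⟩ := ENNReal.lt_iff_exists_nnreal_btwn.1 ha
  -- Gelfand's formula: eventually `‖aⁿ‖ ^ (1 / n) < r`, i.e. `‖aⁿ‖ < rⁿ`.
  refine .of_norm_bounded_eventually_nat
    (summable_geometric_of_lt_one r.2 (by exact_mod_cast hr1)) ?_
  filter_upwards [(spectrum.pow_nnnorm_pow_one_div_tendsto_nhds_spectralRadius a).eventually_lt_const
    hρr, eventually_ge_atTop 1] with n hn hn1
  rw [one_div, ENNReal.rpow_inv_lt_iff (by positivity), ENNReal.rpow_natCast] at hn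
  exact_mod_cast hn.le

section Closure

variable {R A : Type*} [CommSemiring R] [Semiring A] [Algebra R A] [TopologicalSpace A]
  [IsTopologicalSemiring A] [ContinuousConstSMul R A] {s : NonUnitalSubalgebra R A}

theorem NonUnitalSubalgebra.mul_mem_topologicalClosure_left {c : A} (hs : ∀ x ∈ s, c * x ∈ s)
    {x : A} (hx : x ∈ s.topologicalClosure) : c * x ∈ s.topologicalClosure :=
  map_mem_closure (continuous_const_mul c) hx hs

theorem NonUnitalSubalgebra.mul_mem_topologicalClosure_right {c : A} (hs : ∀ x ∈ s, x * c ∈ s)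
    {x : A} (hx : x ∈ s.topologicalClosure) : x * c ∈ s.topologicalClosure :=
  map_mem_closure (f := (· * c)) (continuous_mul_const c) hx hs

theorem NonUnitalSubalgebra.map_eq_zero_of_mem_topologicalClosure {F : Type*} [AddCommMonoid F]
    [Module R F] [TopologicalSpace F] [T1Space F] {E : A →ₗ[R] F} (hE : Continuous E)
    (hs : ∀ x ∈ s, E x = 0) {x : A} (hx : x ∈ s.topologicalClosure) : E x = 0 :=
  closure_minimal hs (isClosed_singleton.preimage hE) hx

end Closure

theorem inverse_add_sub_mem_topologicalClosure_wordAlgebra {R A S : Type*} [CommRing R] [Ring A]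
    [Algebra R A] [TopologicalSpace A] [IsTopologicalRing A] [T2Space A] [ContinuousConstSMul R A]
    [SetLike S A] [MulMemClass S A] {B : S} {b b' T : A} (hb' : b' ∈ B) (hbb' : b * b' = 1)
    (hb'b : b' * b = 1) (hs : Summable fun n => (-(b' * T)) ^ n) :
    Ring.inverse (b + T) - b' ∈ (wordAlgebra R B T).topologicalClosure := by
  rw [Ring.inverse_add_sub_eq_tsum hbb' hb'b hs]
  refine tsum_mem (wordAlgebra R B T).isClosed_topologicalClosure fun n => ?_
  refine (wordAlgebra R B T).le_topologicalClosure ?_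
  have hword : (b' * T) ^ (n + 1) * b' ∈ wordAlgebra R B T :=
    Submodule.subset_span (pow_succ_mul_mem_wordSet hb' n)
  rcases (n + 1).even_or_odd with hn | hn
  · rwa [hn.neg_pow]
  · rw [hn.neg_pow, neg_mul]
    exact neg_mem hword

theorem condexp_word_inverse_sub_eq_zero_general
    {A : Type*} [CStarAlgebra A] [PartialOrder A] [StarOrderedRing A]
    (B : StarSubalgebra ℂ A)
    (E : A →ₗ[ℂ] A) (hE : IsCondExp B E)
    (T : A)
    (hT : ∀ b₀ ∈ B, ∀ l : List A, l ≠ [] → (∀ c ∈ l, c ∈ B) →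
      E (b₀ * (l.map (fun c => T * c)).prod) = 0)
    (b b' : A) (hb' : b' ∈ B) (hbb' : b * b' = 1) (hb'b : b' * b = 1)
    (hq : spectralRadius ℂ (b' * T) = 0)
    (Y₁ : A) (hY₁ : Y₁ = Ring.inverse (b + T) - b') :
    ∀ b₀ ∈ B, ∀ l : List A, l ≠ [] → (∀ c ∈ l, c ∈ B) →
      E (b₀ * (l.map (fun c => Y₁ * c)).prod) = 0 := by
  have hEcont : Continuous E :=
    AddMonoidHomClass.continuous_of_bound E 1 fun x => by simpa using hE.contractive x
  have hs : Summable fun n => (-(b' * T)) ^ n :=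
    summable_pow_of_spectralRadius_lt_one (by simp [spectralRadius_neg, hq])
  set M := (wordAlgebra ℂ B T).topologicalClosure
  have hY₁M : Y₁ ∈ M := hY₁ ▸ inverse_add_sub_mem_topologicalClosure_wordAlgebra hb' hbb' hb'b hs
  have hwords : wordSet B Y₁ ⊆ M :=
    wordSet_subset
      (fun c hc _ hx => (wordAlgebra ℂ B T).mul_mem_topologicalClosure_left
        (fun _ => mul_mem_wordAlgebra_left hc) hx)
      (fun _ hx c hc => (wordAlgebra ℂ B T).mul_mem_topologicalClosure_right
        (fun _ hy => mul_mem_wordAlgebra_right hy hc) hx)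
      hY₁M
  have hTwords : ∀ x ∈ wordSet B T, E x = 0 := by
    rintro _ ⟨b₀, hb₀, l, hl, hlB, rfl⟩
    exact hT b₀ hb₀ l hl hlB
  intro b₀ hb₀ l hl hlB
  exact (wordAlgebra ℂ B T).map_eq_zero_of_mem_topologicalClosure hEcont
    (fun _ => map_eq_zero_of_mem_wordAlgebra hTwords) (hwords ⟨b₀, hb₀, l, hl, hlB, rfl⟩)

/-- Let `E` be a conditional expectation from a unital C*-algebra `A` onto a commutative unital
C*-subalgebra `B`, and let `T ∈ A` be such that `E(b₀ T b₁ T b₂ ⋯ T bₚ) = 0` for all `p ≥ 1`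
and `b₀, …, bₚ ∈ B`.  Let `b ∈ B` be invertible, with inverse `b' ∈ B`, and suppose `b⁻¹ T` is
quasinilpotent (vanishing spectral radius), so that `Z = b + T` is invertible.  Setting
`Y₁ = Z⁻¹ − b⁻¹`, we have `E(b₀ Y₁ b₁ Y₁ b₂ ⋯ Y₁ bₚ) = 0` for all `p ≥ 1` and
`b₀, …, bₚ ∈ B`. -/
theorem condexp_word_inverse_sub_eq_zero
    {A : Type*} [CStarAlgebra A] [PartialOrder A] [StarOrderedRing A]
    (B : StarSubalgebra ℂ A) (hBclosed : IsClosed (B : Set A))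
    (hBcomm : ∀ x ∈ B, ∀ y ∈ B, x * y = y * x)
    (E : A →ₗ[ℂ] A) (hE : IsCondExp B E)
    (T : A)
    (hT : ∀ b₀ ∈ B, ∀ l : List A, l ≠ [] → (∀ c ∈ l, c ∈ B) →
      E (b₀ * (l.map (fun c => T * c)).prod) = 0)
    (b b' : A) (hb : b ∈ B) (hb' : b' ∈ B) (hbb' : b * b' = 1) (hb'b : b' * b = 1)
    (hq : spectralRadius ℂ (b' * T) = 0)
    (Y₁ : A) (hY₁ : Y₁ = Ring.inverse (b + T) - b') :
    ∀ b₀ ∈ B, ∀ l : List A, l ≠ [] → (∀ c ∈ l, c ∈ B) →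
      E (b₀ * (l.map (fun c => Y₁ * c)).prod) = 0 :=
  condexp_word_inverse_sub_eq_zero_general B E hE T hT b b' hb' hbb' hb'b hq Y₁ hY₁
end
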